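/- arXiv:1709.02938 — 3 statements merged into one kernel-verified Lean document; each statement's English description precedes it below -/
import Mathlib

section
/- For any n ≥ 2 and digits q_1, …, q_n ∈ {0,1,2,3}, the modified Hilbert map satisfies (T_{q_1} ∘ ⋯ ∘ T_{q_{n−1}})(F_{q_n}) = 2^{−(n−1)} · H_{q_1}·H_{q_2}···H_{q_{n−1}} · F_{q_n} + Σ_{j=1}^{n−1} 2^{−j} · H_0^{e_{0j}} · H_3^{e_{3j}} · h_{q_j}, where e_{0j} = (number of indices i < j with q_i = 0) mod 2 and e_{3j} = (number of indices i < j with q_i = 3) mod 2. -/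
/-!
Each `T i` is affine with linear part `(1/2) • H_i`, so unrolling the composition gives
`2^{-m} H_{q_0} ⋯ H_{q_{m-1}} x` plus the translations `h_{q_j}` pushed through the prefix products
`H_{q_0} ⋯ H_{q_{j-1}}`, scaled by `2^{-(j+1)}`. Since `H_1 = H_2 = 1` and `H_0`, `H_3` are commuting
involutions, such a prefix product is `H_0 ^ e₀ * H_3 ^ e₃` with `e_d` the parity of the number of
digits equal to `d` in the prefix.
-/

open Matrix

noncomputable section

abbrev E2 := EuclideanSpace ℝ (Fin 2)

def toE (v : Fin 2 → ℝ) : E2 := WithLp.toLp 2 v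

def pt (x y : ℝ) : E2 := WithLp.toLp 2 ![x, y]

def Hm : Fin 4 → Matrix (Fin 2) (Fin 2) ℝ
  | 0 => !![0, 1; 1, 0]
  | 1 => 1
  | 2 => 1
  | 3 => !![0, -1; -1, 0]

def hv : Fin 4 → E2
  | 0 => pt 0 0
  | 1 => pt 0 1
  | 2 => pt 1 1
  | 3 => pt 2 1

def T (i : Fin 4) (v : E2) : E2 :=
  (1 / 2 : ℝ) • toE ((Hm i).mulVec v) + (1 / 2 : ℝ) • hv i

def Q : Set E2 := {p | p 0 ∈ Set.Icc (0:ℝ) 1 ∧ p 1 ∈ Set.Icc (0:ℝ) 1}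

def Fv : Fin 4 → E2
  | 0 => pt (1/4) (1/4)
  | 1 => pt (1/4) (3/4)
  | 2 => pt (3/4) (3/4)
  | 3 => pt (3/4) (1/4)

/-- Composition T_{q 0} ∘ ⋯ ∘ T_{q (n-1)}. -/
def compT : (n : ℕ) → (Fin n → Fin 4) → E2 → E2
  | 0, _ => id
  | n + 1, q => T (q 0) ∘ compT n (fun j => q j.succ)

/-- Node from m+1 digits q 0, …, q m : (T_{q 0} ∘ ⋯ ∘ T_{q (m-1)}) (F_{q m}). -/
def nodeAux : ℕ → (ℕ → Fin 4) → E2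
  | 0, q => Fv (q 0)
  | m + 1, q => T (q 0) (nodeAux m (fun j => q (j + 1)))

/-- j-th base-4 digit of k, for the n-digit expansion (j = 0 is the leading digit). -/
def hdigit (n k j : ℕ) : Fin 4 := ⟨k / 4 ^ (n - 1 - j) % 4, Nat.mod_lt _ (by norm_num)⟩

/-- The k-th node of the n-th order Hilbert curve. -/
def node (n k : ℕ) : E2 := nodeAux (n - 1) (hdigit n k)

open Finset

theorem Commute.prod_ofFn_pow_mul_pow {M : Type*} [Monoid M] {a b : M} (hab : Commute a b)
    {k : ℕ} (f g : Fin k → ℕ) :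
    (List.ofFn fun i => a ^ f i * b ^ g i).prod = a ^ (∑ i, f i) * b ^ (∑ i, g i) := by
  induction k with
  | zero => simp
  | succ k ih =>
    rw [List.ofFn_succ, List.prod_cons, ih, Fin.sum_univ_succ, Fin.sum_univ_succ, pow_add, pow_add,
      mul_assoc, ← mul_assoc (b ^ g 0), (hab.pow_pow _ _).symm.eq]
    simp only [mul_assoc]

theorem Fin.card_filter_lt_and {m : ℕ} (j : Fin m) (p : ℕ → Prop) [DecidablePred p] :
    #{i : Fin m | i < j ∧ p i} = #{i ∈ range j | p i} := by
  have hfilter : ({i : Fin m | i < j ∧ p i} : Finset (Fin m)) = (Iio j).filter (fun i : Fin m => p i) := by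
    ext; simp
  rw [hfilter, ← card_map Fin.valEmbedding, ← Nat.Iio_eq_range, ← Fin.map_valEmbedding_Iio, filter_map]
  rfl

theorem Hm_zero_sq : Hm 0 ^ 2 = 1 := by
  simp [sq, Hm, Matrix.one_fin_two]

theorem Hm_three_sq : Hm 3 ^ 2 = 1 := by
  simp [sq, Hm, Matrix.one_fin_two]

theorem commute_Hm_zero_Hm_three : Commute (Hm 0) (Hm 3) := by
  simp [Commute, SemiconjBy, Hm]

theorem Hm_eq_pow_mul_pow (d : Fin 4) :
    Hm d = Hm 0 ^ (if d = 0 then 1 else 0) * Hm 3 ^ (if d = 3 then 1 else 0) := by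
  fin_cases d <;> simp [Hm]

theorem T_apply (i : Fin 4) (v : E2) : T i v = (1 / 2 : ℝ) • (toLpLin 2 2 (Hm i) v + hv i) := by
  rw [smul_add]; rfl

def prefixProd (q : ℕ → Fin 4) (k : ℕ) : Matrix (Fin 2) (Fin 2) ℝ :=
  (List.ofFn fun i : Fin k => Hm (q i)).prod

theorem prefixProd_zero (q : ℕ → Fin 4) : prefixProd q 0 = 1 := rfl

theorem prefixProd_succ (q : ℕ → Fin 4) (k : ℕ) :
    prefixProd q (k + 1) = Hm (q 0) * prefixProd (fun i => q (i + 1)) k := by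
  simp [prefixProd, List.ofFn_succ]

theorem prefixProd_eq_pow_mul_pow (q : ℕ → Fin 4) (k : ℕ) :
    prefixProd q k =
      Hm 0 ^ (#{i ∈ range k | q i = 0} % 2) * Hm 3 ^ (#{i ∈ range k | q i = 3} % 2) := by
  have hcount (d : Fin 4) : #{i ∈ range k | q i = d} = ∑ i : Fin k, if q i = d then 1 else 0 := by
    rw [card_filter, Fin.sum_univ_eq_sum_range (fun i => if q i = d then 1 else 0)]
  rw [← pow_eq_pow_mod _ Hm_zero_sq, ← pow_eq_pow_mod _ Hm_three_sq, hcount, hcount,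
    ← commute_Hm_zero_Hm_three.prod_ofFn_pow_mul_pow, prefixProd]
  simp_rw [← Hm_eq_pow_mul_pow]

theorem compT_apply (m : ℕ) (q : ℕ → Fin 4) (x : E2) :
    compT m (fun j => q j) x = (1 / 2 ^ m : ℝ) • toLpLin 2 2 (prefixProd q m) x +
      ∑ j : Fin m, (1 / 2 ^ ((j : ℕ) + 1) : ℝ) • toLpLin 2 2 (prefixProd q j) (hv (q j)) := by
  induction m generalizing q with
  | zero => simp [compT, prefixProd_zero]
  | succ m ih =>
    have hstep : compT (m + 1) (fun j => q j) x = T (q 0) (compT m (fun j => q (j + 1)) x) := by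
      simp [compT]
    have halve (k : ℕ) : (1 / 2 : ℝ) * (1 / 2 ^ k) = 1 / 2 ^ (k + 1) := by ring
    rw [hstep, ih (fun i => q (i + 1)), T_apply, Fin.sum_univ_succ]
    simp only [Fin.val_zero, Fin.val_succ, prefixProd_succ, prefixProd_zero, toLpLin_mul_same,
      toLpLin_one, LinearMap.comp_apply, LinearMap.id_apply, map_add, map_smul, map_sum, smul_add,
      smul_sum, smul_smul, halve, zero_add, pow_one]
    abel

/-- closed form for the modified Hilbert map:
(T_{q_1}∘⋯∘T_{q_{n−1}})(F_{q_n}) = 2^{−(n−1)}·H_{q_1}⋯H_{q_{n−1}}·F_{q_n}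
+ Σ_{j=1}^{n−1} 2^{−j}·H_0^{e_{0j}}·H_3^{e_{3j}}·h_{q_j}. -/
theorem modified_hilbert_map_formula (n : ℕ) (hn : 2 ≤ n) (q : Fin n → Fin 4) :
    compT (n - 1) (fun j => q (Fin.castLE (by omega) j)) (Fv (q ⟨n - 1, by omega⟩)) =
      ((1:ℝ) / 2 ^ (n - 1)) •
        toE (((List.ofFn fun j : Fin (n - 1) => Hm (q (Fin.castLE (by omega) j))).prod).mulVec
          (Fv (q ⟨n - 1, by omega⟩))) +
      ∑ j : Fin (n - 1), ((1:ℝ) / 2 ^ ((j : ℕ) + 1)) •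
        toE ((Hm 0 ^ ((Finset.univ.filter fun i : Fin (n - 1) =>
                i < j ∧ q (Fin.castLE (by omega) i) = 0).card % 2) *
              Hm 3 ^ ((Finset.univ.filter fun i : Fin (n - 1) =>
                i < j ∧ q (Fin.castLE (by omega) i) = 3).card % 2)).mulVec
              (hv (q (Fin.castLE (by omega) j)))) := by
  obtain ⟨p, hp⟩ : ∃ p : ℕ → Fin 4, ∀ j : Fin (n - 1), q (Fin.castLE (by omega) j) = p j :=
    ⟨fun i => q ⟨i % n, Nat.mod_lt _ (by omega)⟩, fun j => by
      congr 1; ext; simp [Nat.mod_eq_of_lt (by omega : (j : ℕ) < n)]⟩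
  have hprod (j : Fin (n - 1)) :
      Hm 0 ^ (#{i : Fin (n - 1) | i < j ∧ p i = 0} % 2) *
        Hm 3 ^ (#{i : Fin (n - 1) | i < j ∧ p i = 3} % 2) = prefixProd p j := by
    rw [prefixProd_eq_pow_mul_pow, Fin.card_filter_lt_and j (p · = 0),
      Fin.card_filter_lt_and j (p · = 3)]
  simp only [hp, hprod]
  -- `toLpLin 2 2 M x` unfolds to `toE (M *ᵥ x)`
  exact compT_apply (n - 1) p _

end
end

section
/- Each node of the n-th order Hilbert curve lies in the interior of the first-level quadrant determined by its leading base-4 digit: for every n ≥ 1 and 0 ≤ k < 4^n, node_n(k) lies in the interior of T_{q_1}(Q), where q_1 = ⌊k / 4^{n−1}⌋. Consequently (Lemma 1 of the paper), two consecutive nodes node_n(k) and node_n(k+1) lie in distinct quadrant images T_a(Q), T_b(Q) with a ≠ b exactly when k + 1 is a multiple of 4^{n−1}, i.e. exactly when k has base-4 digits (q, 3, 3, …, 3) and k+1 has digits (q+1, 0, 0, …, 0) for some q ∈ {0,1,2}. -/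
open Matrix

noncomputable section

/-! Each `T i` maps the open unit square into itself and `F i = T i (1/2, 1/2)`, so by induction
on the number of digits `node n k = T q₁ v` for some `v` in the open unit square. Since `H i` is an
involution, `T i` is an affine bijection with continuous inverse `w ↦ H i (2 w - h i)`, hence an open
map, and `T q₁` of the open square lies in the interior of `T q₁ '' Q`.

The digit statements are base-4 arithmetic: `4 ^ (n - 1) ∣ k + 1` says exactly that the lower
`n - 1` digits of `k + 1` vanish, which forces those of `k` to be `3`, and the leading digit goes up
by one precisely in that case. -/

open Set

@[simp] lemma pt_apply_zero (x y : ℝ) : pt x y 0 = x := rfl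
@[simp] lemma pt_apply_one (x y : ℝ) : pt x y 1 = y := rfl

lemma T_zero_apply (v : E2) : T 0 v = pt (v 1 / 2) (v 0 / 2) := by
  ext j; fin_cases j <;> simp [T, toE, pt, Hm, hv, dotProduct, Fin.sum_univ_two] <;> ring

lemma T_one_apply (v : E2) : T 1 v = pt (v 0 / 2) (v 1 / 2 + 1 / 2) := by
  ext j; fin_cases j <;> simp [T, toE, pt, Hm, hv] <;> ring

lemma T_two_apply (v : E2) : T 2 v = pt (v 0 / 2 + 1 / 2) (v 1 / 2 + 1 / 2) := by
  ext j; fin_cases j <;> simp [T, toE, pt, Hm, hv] <;> ring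

lemma T_three_apply (v : E2) : T 3 v = pt (1 - v 1 / 2) (1 / 2 - v 0 / 2) := by
  ext j; fin_cases j <;> simp [T, toE, pt, Hm, hv, dotProduct, Fin.sum_univ_two] <;> ring

def openSquare : Set E2 := {p | p 0 ∈ Ioo (0 : ℝ) 1 ∧ p 1 ∈ Ioo (0 : ℝ) 1}

lemma mapsTo_T_openSquare (i : Fin 4) : MapsTo (T i) openSquare openSquare := by
  rintro v ⟨⟨h0, h0'⟩, h1, h1'⟩
  fin_cases i <;>
    simp only [openSquare, T_zero_apply, T_one_apply, T_two_apply, T_three_apply, Fin.zero_eta,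
      Fin.mk_one, Fin.reduceFinMk, mem_ofPred_eq, pt_apply_zero, pt_apply_one, mem_Ioo] <;>
    refine ⟨⟨?_, ?_⟩, ?_, ?_⟩ <;> linarith

lemma Fv_eq_T_center (i : Fin 4) : Fv i = T i (pt (1 / 2) (1 / 2)) := by
  fin_cases i <;> simp [Fv, T_zero_apply, T_one_apply, T_two_apply, T_three_apply] <;> norm_num

lemma Hm_mul_self (i : Fin 4) : Hm i * Hm i = 1 := by
  fin_cases i <;> ext a b <;> fin_cases a <;> fin_cases b <;> simp [Hm]

def Tinv (i : Fin 4) (w : E2) : E2 := toE (Hm i *ᵥ (2 • w - hv i))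

lemma T_Tinv (i : Fin 4) (w : E2) : T i (Tinv i w) = w := by
  simp only [T, Tinv, toE, WithLp.ofLp_toLp, mulVec_mulVec, Hm_mul_self, one_mulVec,
    WithLp.toLp_sub, WithLp.toLp_smul, WithLp.toLp_ofLp]
  module

lemma Tinv_T (i : Fin 4) (v : E2) : Tinv i (T i v) = v := by
  have h : 2 • (T i v).ofLp - (hv i).ofLp = Hm i *ᵥ v := by
    rw [T, toE, WithLp.ofLp_add, WithLp.ofLp_smul, WithLp.ofLp_smul, WithLp.ofLp_toLp]; module
  rw [Tinv, h, toE, mulVec_mulVec, Hm_mul_self, one_mulVec, WithLp.toLp_ofLp]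

lemma isOpenMap_T (i : Fin 4) : IsOpenMap (T i) :=
  IsOpenMap.of_inverse (by unfold Tinv toE; fun_prop) (T_Tinv i) (Tinv_T i)

lemma isOpen_openSquare : IsOpen openSquare :=
  (isOpen_Ioo.preimage (EuclideanSpace.proj (0 : Fin 2)).continuous).inter
    (isOpen_Ioo.preimage (EuclideanSpace.proj (1 : Fin 2)).continuous)

lemma openSquare_subset_Q : openSquare ⊆ Q :=
  fun _ ⟨h0, h1⟩ => ⟨Ioo_subset_Icc_self h0, Ioo_subset_Icc_self h1⟩

lemma image_openSquare_subset_interior (i : Fin 4) : T i '' openSquare ⊆ interior (T i '' Q) :=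
  interior_maximal (image_mono openSquare_subset_Q) (isOpenMap_T i _ isOpen_openSquare)

lemma nodeAux_mem_image_openSquare (m : ℕ) (q : ℕ → Fin 4) :
    nodeAux m q ∈ T (q 0) '' openSquare := by
  induction m generalizing q with
  | zero => exact ⟨pt (1 / 2) (1 / 2), by norm_num [openSquare], (Fv_eq_T_center _).symm⟩
  | succ m ih => exact mem_image_of_mem _ (mapsTo_T_openSquare _ |>.image_subset (ih _))

theorem node_mem_interior_image (n k : ℕ) : node n k ∈ interior (T (hdigit n k 0) '' Q) :=
  image_openSquare_subset_interior _ (nodeAux_mem_image_openSquare _ _)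

namespace Nat

variable {b m x : ℕ}

lemma mod_eq_sub_one_of_dvd_succ (hb : 0 < b) (h : b ∣ x + 1) : x % b = b - 1 := by
  obtain ⟨c, hc⟩ := h
  rcases c with _ | c
  · simp at hc
  · rw [show x = b * c + (b - 1) by rw [mul_add] at hc; omega, mul_add_mod,
      mod_eq_of_lt (by omega)]

lemma div_pow_mod_eq_zero_of_pow_dvd {i : ℕ} (h : b ^ m ∣ x) (hi : i < m) :
    x / b ^ i % b = 0 := by
  rw [← mod_mul_right_div_self, ← pow_succ,
    mod_eq_zero_of_dvd ((pow_dvd_pow b hi).trans h), Nat.zero_div]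

lemma div_pow_mod_eq_sub_one_of_pow_dvd_succ {i : ℕ} (hb : 0 < b) (h : b ^ m ∣ x + 1)
    (hi : i < m) : x / b ^ i % b = b - 1 := by
  have hsucc : (x + 1) / b ^ i = x / b ^ i + 1 := by
    rw [Nat.succ_div, if_pos ((pow_dvd_pow b hi.le).trans h)]
  refine mod_eq_sub_one_of_dvd_succ hb ?_
  rw [← hsucc]
  exact dvd_div_of_mul_dvd (pow_succ b i ▸ (pow_dvd_pow b hi).trans h)

lemma pow_dvd_of_div_pow_mod_eq_zero (h : ∀ i < m, x / b ^ i % b = 0) : b ^ m ∣ x := by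
  induction m with
  | zero => exact one_dvd x
  | succ m ih =>
    refine dvd_of_mod_eq_zero ?_
    rw [mod_pow_succ, mod_eq_zero_of_dvd (ih fun i hi => h i (by omega)), h m (by omega),
      mul_zero, add_zero]

end Nat

lemma val_hdigit_zero {n k : ℕ} (hk : k < 4 ^ n) : (hdigit n k 0 : ℕ) = k / 4 ^ (n - 1) := by
  refine Nat.mod_eq_of_lt ((Nat.div_lt_iff_lt_mul (by positivity)).mpr (hk.trans_le ?_))
  rw [Nat.sub_zero, ← pow_succ']
  exact Nat.pow_le_pow_right (by norm_num) (by omega)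

lemma hdigit_zero_ne_succ_iff {n k : ℕ} (hk : k + 1 < 4 ^ n) :
    hdigit n k 0 ≠ hdigit n (k + 1) 0 ↔ 4 ^ (n - 1) ∣ k + 1 := by
  rw [Ne, Fin.ext_iff, val_hdigit_zero (by omega), val_hdigit_zero hk, Nat.succ_div]
  split_ifs with h <;> simp [h]

lemma pow_dvd_succ_iff_hdigit {n k : ℕ} (hk : k + 1 < 4 ^ n) :
    4 ^ (n - 1) ∣ k + 1 ↔ ∃ q : ℕ, q ≤ 2 ∧
      (∀ j : ℕ, j < n → (hdigit n k j : ℕ) = if j = 0 then q else 3) ∧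
      (∀ j : ℕ, j < n → (hdigit n (k + 1) j : ℕ) = if j = 0 then q + 1 else 0) := by
  constructor
  · intro h
    have hlead : (hdigit n (k + 1) 0 : ℕ) = (hdigit n k 0 : ℕ) + 1 := by
      rw [val_hdigit_zero hk, val_hdigit_zero (by omega), Nat.succ_div, if_pos h]
    refine ⟨hdigit n k 0, by have := (hdigit n (k + 1) 0).isLt; omega, fun j hj => ?_,
      fun j hj => ?_⟩
    · split_ifs with hj0
      · rw [hj0]
      · exact Nat.div_pow_mod_eq_sub_one_of_pow_dvd_succ (by norm_num) h (by omega)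
    · split_ifs with hj0
      · rw [hj0, hlead]
      · exact Nat.div_pow_mod_eq_zero_of_pow_dvd h (by omega)
  · rintro ⟨q, -, -, hsucc⟩
    refine Nat.pow_dvd_of_div_pow_mod_eq_zero fun i hi => ?_
    have := hsucc (n - 1 - i) (by omega)
    rw [if_neg (by omega)] at this
    simpa only [hdigit, show n - 1 - (n - 1 - i) = i by omega] using this

theorem node_in_quadrant_interior_general (n : ℕ) (k : ℕ) :
    node n k ∈ interior (T (hdigit n k 0) '' Q) ∧
    (k + 1 < 4 ^ n →
      ((hdigit n k 0 ≠ hdigit n (k + 1) 0) ↔ 4 ^ (n - 1) ∣ (k + 1)) ∧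
      ((4 ^ (n - 1) ∣ (k + 1)) ↔ ∃ q : ℕ, q ≤ 2 ∧
        (∀ j : ℕ, j < n → (hdigit n k j : ℕ) = if j = 0 then q else 3) ∧
        (∀ j : ℕ, j < n → (hdigit n (k + 1) j : ℕ) = if j = 0 then q + 1 else 0))) :=
  ⟨node_mem_interior_image n k,
    fun hk => ⟨hdigit_zero_ne_succ_iff hk, pow_dvd_succ_iff_hdigit hk⟩⟩

/-- node_n(k) lies in the interior of the quadrant T_{q_1}(Q) given by its
leading base-4 digit; consecutive nodes lie in distinct quadrants exactly when
4^{n−1} ∣ k+1, i.e. exactly when k has digits (q,3,…,3) and k+1 has digits (q+1,0,…,0). -/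
theorem node_in_quadrant_interior (n : ℕ) (hn : 1 ≤ n) (k : ℕ) (hk : k < 4 ^ n) :
    node n k ∈ interior (T (hdigit n k 0) '' Q) ∧
    (k + 1 < 4 ^ n →
      ((hdigit n k 0 ≠ hdigit n (k + 1) 0) ↔ 4 ^ (n - 1) ∣ (k + 1)) ∧
      ((4 ^ (n - 1) ∣ (k + 1)) ↔ ∃ q : ℕ, q ≤ 2 ∧
        (∀ j : ℕ, j < n → (hdigit n k j : ℕ) = if j = 0 then q else 3) ∧
        (∀ j : ℕ, j < n → (hdigit n (k + 1) j : ℕ) = if j = 0 then q + 1 else 0))) :=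
  node_in_quadrant_interior_general n k

end
end

section
/- Displacement across an exiting corner node (core computation of Theorem 1): let n ≥ 2, q ∈ {0,1,2}, and k = (q+1)·4^{n−1} − 1 (the exiting corner node of the (q+1)-th quadrant, with base-4 digits (q,3,…,3)). Then the vector from the node preceding the corner node to the node succeeding it equals node_n(k+1) − node_n(k−1) = (1/2)·(h_{q+1} − h_q − H_q·(1,0)) + 2^{1−n}·(H_{q+1}·F_0 − H_q·v_n), where v_n = (−1/4, 3/4) if n is even and v_n = (−3/4, 1/4) if n is odd; in particular, up to the scale factor 2^{1−n}, this displacement is determined solely by q and the parity of n. -/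
open Matrix

noncomputable section

/-! The Hilbert curve is self-similar: for `r < 4^(n-1)`, `node n (a·4^(n-1) + r) = T a (node (n-1) r)`.
The successor `k + 1 = (q+1)·4^(n-1)` of the corner is therefore `T (q+1)` of the first node of
order `n-1`, which is `2^(2-n) F₀` because `T 0` halves the diagonal. The predecessor
`k - 1 = q·4^(n-1) + (4^(n-1) - 2)` is `T q` of the penultimate node of order `n-1`; iterating `T 3`,
a halving reflection in the antidiagonal through `(1,0)`, puts that node at `(1,0) + 2^(2-n) v`
with `v` alternating between two offsets. The difference of the two affine images is then a linear
identity. -/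

lemma nodeAux_congr : ∀ (m : ℕ) {d d' : ℕ → Fin 4},
    (∀ j ≤ m, d j = d' j) → nodeAux m d = nodeAux m d'
  | 0, _, _, h => by rw [nodeAux, nodeAux, h 0 le_rfl]
  | m + 1, _, _, h => by
    rw [nodeAux, nodeAux, h 0 m.succ.zero_le, nodeAux_congr m fun j hj => h (j + 1) (by omega)]

lemma hdigit_mul_pow_add_zero (n : ℕ) (a : Fin 4) {r : ℕ} (hr : r < 4 ^ (n + 1)) :
    hdigit (n + 2) (a * 4 ^ (n + 1) + r) 0 = a := by
  ext
  simp only [hdigit, show n + 2 - 1 - 0 = n + 1 by omega]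
  rw [mul_comm, Nat.mul_add_div (by positivity), Nat.div_eq_of_lt hr, add_zero,
    Nat.mod_eq_of_lt a.isLt]

lemma hdigit_mul_pow_add_succ (n a r : ℕ) {j : ℕ} (hj : j ≤ n) :
    hdigit (n + 2) (a * 4 ^ (n + 1) + r) (j + 1) = hdigit (n + 1) r j := by
  ext
  have hpow : 4 ^ (n + 1) = 4 ^ (n - j) * (4 ^ j * 4) := by
    rw [← pow_succ, ← pow_add]; congr 1; omega
  simp only [hdigit, show n + 2 - 1 - (j + 1) = n - j by omega, show n + 1 - 1 - j = n - j by omega]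
  rw [hpow, mul_left_comm, Nat.mul_add_div (by positivity), ← mul_assoc, Nat.mul_add_mod_self_right]

lemma node_mul_pow_add (n : ℕ) (a : Fin 4) {r : ℕ} (hr : r < 4 ^ (n + 1)) :
    node (n + 2) (a * 4 ^ (n + 1) + r) = T a (node (n + 1) r) := by
  simp only [node, show n + 2 - 1 = n + 1 by omega, Nat.add_sub_cancel, nodeAux,
    hdigit_mul_pow_add_zero n a hr]
  exact congrArg _ (nodeAux_congr n fun j hj => hdigit_mul_pow_add_succ n a r hj)

lemma T_smul_sub_T_add_smul (i j : Fin 4) (c : ℝ) (u e w : E2) :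
    T i (c • u) - T j (e + c • w) =
      (1 / 2 : ℝ) • (hv i - hv j - toE ((Hm j).mulVec e)) +
        (c / 2) • (toE ((Hm i).mulVec u) - toE ((Hm j).mulVec w)) := by
  simp only [T, toE, WithLp.ofLp_add, WithLp.ofLp_smul, mulVec_add, mulVec_smul,
    WithLp.toLp_add, WithLp.toLp_smul]
  module

/-- The paper's `v_n` for every `n ≡ m (mod 2)`. -/
def exitOffset (m : ℕ) : Fin 2 → ℝ := if Even m then ![-(1/4), 3/4] else ![-(3/4), 1/4]

lemma T_zero_smul_Fv_zero (c : ℝ) : T 0 (c • Fv 0) = (c / 2) • Fv 0 := by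
  ext i
  fin_cases i <;> simp [T, toE, Fv, pt, hv, Hm] <;> ring

lemma T_three_exitOffset (m : ℕ) (c : ℝ) :
    T 3 (pt 1 0 + c • toE (exitOffset m)) = pt 1 0 + (c / 2) • toE (exitOffset (m + 1)) := by
  have hreflect (x y : ℝ) : T 3 (pt 1 0 + c • pt x y) = pt 1 0 + (c / 2) • pt (-y) (-x) := by
    ext i
    fin_cases i <;> simp [T, toE, pt, hv, Hm] <;> ring
  rcases Nat.even_or_odd m with hm | hm
  · simp only [exitOffset, if_pos hm, if_neg (Nat.not_even_iff_odd.mpr hm.add_one)]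
    exact (hreflect _ _).trans (by norm_num [pt]; rfl)
  · simp only [exitOffset, if_neg (Nat.not_even_iff_odd.mpr hm), if_pos hm.add_one]
    exact (hreflect _ _).trans (by norm_num [pt]; rfl)

lemma node_zero (m : ℕ) : node (m + 1) 0 = ((2 : ℝ) ^ m)⁻¹ • Fv 0 := by
  induction m with
  | zero => simp [node, nodeAux, hdigit]
  | succ m ih =>
    have hfirst := node_mul_pow_add m 0 (r := 0) (by positivity)
    simp only [Fin.val_zero, zero_mul, add_zero] at hfirst
    rw [hfirst, ih, T_zero_smul_Fv_zero, pow_succ, mul_inv, div_eq_mul_inv]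

lemma node_pow_sub_two (m : ℕ) :
    node (m + 1) (4 ^ (m + 1) - 2) = pt 1 0 + ((2 : ℝ) ^ m)⁻¹ • toE (exitOffset m) := by
  induction m with
  | zero =>
    show Fv 2 = _
    ext i
    fin_cases i <;> norm_num [Fv, pt, exitOffset, toE]
  | succ m ih =>
    have hsplit : 4 ^ (m + 1 + 1) - 2 = ((3 : Fin 4) : ℕ) * 4 ^ (m + 1) + (4 ^ (m + 1) - 2) := by
      have : 4 ≤ 4 ^ (m + 1) := Nat.le_self_pow m.succ_ne_zero 4
      norm_num [pow_succ 4 (m + 1)]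
      omega
    rw [hsplit, node_mul_pow_add m 3 (Nat.sub_lt (by positivity) two_pos), ih, T_three_exitOffset,
      pow_succ, mul_inv, div_eq_mul_inv]

/-- displacement across the exiting corner node k = (q+1)·4^{n−1} − 1:
node_n(k+1) − node_n(k−1) = (1/2)(h_{q+1} − h_q − H_q·(1,0)) + 2^{1−n}(H_{q+1}F_0 − H_q v_n). -/
theorem displacement_across_exiting_corner (n : ℕ) (hn : 2 ≤ n) (q : Fin 4)
    (hq : (q : ℕ) ≤ 2) (k : ℕ) (hk : k = ((q : ℕ) + 1) * 4 ^ (n - 1) - 1) :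
    node n (k + 1) - node n (k - 1) =
      (1/2 : ℝ) • (hv (q + 1) - hv q - toE ((Hm q).mulVec ![1, 0])) +
      (2:ℝ) ^ ((1:ℤ) - n) • (toE ((Hm (q + 1)).mulVec (Fv 0)) -
        toE ((Hm q).mulVec (if Even n then ![-(1/4), 3/4] else ![-(3/4), 1/4]))) := by
  obtain ⟨m, rfl⟩ : ∃ m, n = m + 2 := ⟨n - 2, by omega⟩
  have hpos : 0 < 4 ^ (m + 1) := by positivity
  have hk' : k = ((q : ℕ) + 1) * 4 ^ (m + 1) - 1 := hk
  have hsucc : k + 1 = ((q + 1 : Fin 4) : ℕ) * 4 ^ (m + 1) + 0 := by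
    rw [Fin.val_add_one_of_lt (by rw [Fin.lt_def, Fin.val_last]; omega)]
    have := Nat.mul_le_mul_right (4 ^ (m + 1)) (Nat.le_add_left 1 q)
    omega
  have hpred : k - 1 = (q : ℕ) * 4 ^ (m + 1) + (4 ^ (m + 1) - 2) := by
    have : 4 ≤ 4 ^ (m + 1) := Nat.le_self_pow m.succ_ne_zero 4
    rw [hk', add_one_mul]
    omega
  have hscale : (2 : ℝ) ^ ((1 : ℤ) - (m + 2 : ℕ)) = ((2 : ℝ) ^ m)⁻¹ / 2 := by
    rw [show (1 : ℤ) - (m + 2 : ℕ) = -((m + 1 : ℕ) : ℤ) by push_cast; ring, _root_.zpow_neg,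
      _root_.zpow_natCast, pow_succ, mul_inv, div_eq_mul_inv]
  have hparity : (if Even (m + 2) then ![-(1/4), 3/4] else ![-(3/4), 1/4]) = exitOffset m := by
    simp [exitOffset, Nat.even_add]
  rw [hsucc, hpred, node_mul_pow_add m _ hpos, node_mul_pow_add m q (Nat.sub_lt hpos two_pos),
    node_zero, node_pow_sub_two, T_smul_sub_T_add_smul, hscale, hparity]
  rfl

end
end
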